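/- arXiv:2110.01559 — 4 statements merged into one kernel-verified Lean document; each statement's English description precedes it below -/
import Mathlib

section
/- Let F be a probability distribution on ℝ ∪ {−∞} with finite essential supremum L := inf{z ∈ ℝ : P(w > z) = 0} satisfying −∞ < L ≤ 0, and let (w_{i,j}, 0 ≤ i < j) be i.i.d. random variables with law F. Then W_n converges in distribution, as n → ∞, to the random variable max(w, 2L), where w has law F; that is, the law of W_n converges weakly to the pushforward of F under the map x ↦ max(x, 2L). -/
open MeasureTheory ProbabilityTheory Filter
open scoped ENNReal Topology BoundedContinuousFunction

noncomputable section

/-- Charge of a path (a list of vertices): sum of the edge charges, with the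
convention `⊥ + x = ⊥` (built into `EReal` addition, values in `ℝ ∪ {-∞}` never meet `⊤`).
A single-vertex path has charge `0`. -/
def pathCharge (w : ℕ → ℕ → EReal) : List ℕ → EReal
  | [] => 0
  | [_] => 0
  | i :: j :: rest => w i j + pathCharge w (j :: rest)

/-- `π` is a path from `i` to `j`: a finite strictly increasing list of vertices
starting at `i` and ending at `j`. -/
def IsPath (i j : ℕ) (π : List ℕ) : Prop :=
  π.Chain' (· < ·) ∧ π.head? = some i ∧ π.getLast? = some j

/-- `W_{i,j}`: the maximal charge over all paths from `i` to `j`. -/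
def maxCharge (w : ℕ → ℕ → EReal) (i j : ℕ) : EReal :=
  sSup (pathCharge w '' {π | IsPath i j π})

/-!
When every charge is at most `L ≤ 0`, a path with two or more edges has charge at most `2L`, so
`w₀ₙ ≤ Wₙ ≤ max(w₀ₙ, 2L)`, and `max(w₀ₙ, 2L)` already has the limit law. For `c < L` the `n - 1`
two-edge paths `0 → k → n` are independent, each having both charges above `c` with probability
`P(w > c)² > 0`; so outside an event of probability `(1 - P(w > c)²)ⁿ⁻¹` one of them gives
`Wₙ ≥ 2c`. There either `Wₙ = w₀ₙ ≥ 2L`, or `Wₙ` and `max(w₀ₙ, 2L) = 2L` both lie in `[2c, 2L]`,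
which continuity of the test function at `2L` makes harmless as `c ↑ L`.
-/

section Paths

variable {w : ℕ → ℕ → EReal}

@[simp] lemma pathCharge_singleton (i : ℕ) : pathCharge w [i] = 0 := rfl

@[simp] lemma pathCharge_cons_cons (i j : ℕ) (π : List ℕ) :
    pathCharge w (i :: j :: π) = w i j + pathCharge w (j :: π) := rfl

lemma pathCharge_nonpos (hw : ∀ i j, w i j ≤ 0) : ∀ π, pathCharge w π ≤ 0
  | [] => le_rfl
  | [_] => le_rfl
  | i :: j :: π => add_nonpos (hw i j) (pathCharge_nonpos hw (j :: π))

lemma IsPath.eq_pair_or_eq_cons_cons_cons {i j : ℕ} {π : List ℕ} (h : IsPath i j π)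
    (hij : i < j) :
    π = [i, j] ∨ ∃ k l π', π = i :: k :: l :: π' := by
  obtain ⟨-, hhead, hlast⟩ := h
  match π, hhead, hlast with
  | [_], rfl, hlast => simp at hlast; omega
  | [_, _], rfl, hlast => simp at hlast; simp [hlast]
  | _ :: k :: l :: π', rfl, _ => exact Or.inr ⟨k, l, π', rfl⟩

lemma isPath_pair {i j : ℕ} (hij : i < j) : IsPath i j [i, j] :=
  ⟨List.isChain_pair.2 hij, rfl, rfl⟩

lemma isPath_triple {i k j : ℕ} (hik : i < k) (hkj : k < j) : IsPath i j [i, k, j] :=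
  ⟨List.isChain_cons_cons.2 ⟨hik, List.isChain_pair.2 hkj⟩, rfl, rfl⟩

lemma pathCharge_le_maxCharge {i j : ℕ} {π : List ℕ} (h : IsPath i j π) :
    pathCharge w π ≤ maxCharge w i j :=
  le_sSup ⟨π, h, rfl⟩

lemma le_maxCharge_of_lt {i j : ℕ} (hij : i < j) : w i j ≤ maxCharge w i j := by
  simpa using pathCharge_le_maxCharge (w := w) (isPath_pair hij)

lemma add_le_maxCharge {i k j : ℕ} (hik : i < k) (hkj : k < j) :
    w i k + w k j ≤ maxCharge w i j := by
  simpa using pathCharge_le_maxCharge (w := w) (isPath_triple hik hkj)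

lemma maxCharge_le_max {L : EReal} (hw : ∀ i j, w i j ≤ L) (hL : L ≤ 0) {i j : ℕ} (hij : i < j) :
    maxCharge w i j ≤ max (w i j) (L + L) := by
  refine sSup_le ?_
  rintro _ ⟨π, hπ, rfl⟩
  rcases hπ.eq_pair_or_eq_cons_cons_cons hij with rfl | ⟨k, l, π', rfl⟩
  · simp
  · have hrest := pathCharge_nonpos (fun a b => (hw a b).trans hL) (l :: π')
    calc pathCharge w (i :: k :: l :: π') ≤ L + (L + 0) := by
          simp only [pathCharge_cons_cons]; gcongr <;> apply hw
      _ ≤ max (w i j) (L + L) := by simp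

lemma dist_maxCharge_le {E : Type*} [PseudoMetricSpace E] {f : EReal → E} {L a : EReal} {ε : ℝ}
    (hε : 0 ≤ ε) (hw : ∀ i j, w i j ≤ L) (hL : L ≤ 0) {i k j : ℕ} (hik : i < k) (hkj : k < j)
    (ha : a ≤ w i k + w k j) (hf : ∀ y ∈ Set.Icc a (L + L), dist (f y) (f (L + L)) ≤ ε) :
    dist (f (maxCharge w i j)) (f (max (w i j) (L + L))) ≤ ε := by
  have hupper := maxCharge_le_max hw hL (hik.trans hkj)
  rcases le_total (L + L) (w i j) with hdirect | hdetour
  · rw [max_eq_left hdirect] at hupper ⊢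
    rw [le_antisymm hupper (le_maxCharge_of_lt (hik.trans hkj)), dist_self]
    exact hε
  · rw [max_eq_right hdetour] at hupper ⊢
    exact hf _ ⟨ha.trans (add_le_maxCharge hik hkj), hupper⟩

end Paths

section Measurability

variable {Ω : Type*} [MeasurableSpace Ω] {w : ℕ → ℕ → Ω → EReal}

lemma measurable_pathCharge (hw : ∀ i j, Measurable (w i j)) :
    ∀ π, Measurable fun ω => pathCharge (fun i j => w i j ω) π
  | [] => measurable_const
  | [_] => measurable_const
  | i :: j :: π => (hw i j).add (measurable_pathCharge hw (j :: π))

lemma measurable_maxCharge (hw : ∀ i j, Measurable (w i j)) (i j : ℕ) :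
    Measurable fun ω => maxCharge (fun i j => w i j ω) i j := by
  simp only [maxCharge, sSup_image']
  exact .iSup fun π => measurable_pathCharge hw π.1

end Measurability

lemma ContinuousAt.exists_coe_lt_forall_Icc_dist_le {E : Type*} [PseudoMetricSpace E]
    {f : EReal → E} {x : EReal} (hf : ContinuousAt f x) (hx : x ≠ ⊥) {ε : ℝ} (hε : 0 < ε) :
    ∃ a : ℝ, (a : EReal) < x ∧ ∀ y ∈ Set.Icc (a : EReal) x, dist (f y) (f x) ≤ ε := by
  obtain ⟨l, hlx, hball⟩ :=
    exists_Ioc_subset_of_mem_nhds (hf (Metric.ball_mem_nhds _ hε)) ⟨⊥, bot_lt_iff_ne_bot.2 hx⟩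
  obtain ⟨a, hla, hax⟩ := EReal.exists_between_coe_real hlx
  exact ⟨a, hax, fun y hy => (Metric.mem_ball.1 (hball ⟨hla.trans_le hy.1, hy.2⟩)).le⟩

section Independence

variable {Ω : Type*} {mΩ : MeasurableSpace Ω} {μ : Measure Ω}

lemma iIndep.measure_biInter_eq_prod_of_pairwiseDisjoint {ι κ : Type*}
    {m : ι → MeasurableSpace Ω} (h_le : ∀ i, m i ≤ mΩ) (h_indep : iIndep m μ) {g : κ → Set ι}
    {K : Finset κ} (hg : (K : Set κ).PairwiseDisjoint g) {E : κ → Set Ω}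
    (hE : ∀ k ∈ K, MeasurableSet[⨆ i ∈ g k, m i] (E k)) :
    μ (⋂ k ∈ K, E k) = ∏ k ∈ K, μ (E k) := by
  classical
  have := h_indep.isProbabilityMeasure
  induction K using Finset.induction_on with
  | empty => simp
  | insert a K ha ih =>
    rw [Finset.set_biInter_insert, Finset.prod_insert ha,
      ← ih (hg.subset (by simp)) fun k hk => hE k (Finset.mem_insert_of_mem hk)]
    have hdisj : Disjoint (g a) (⋃ k ∈ K, g k) :=
      Set.disjoint_iUnion₂_right.2 fun k hk =>
        hg (by simp) (by simp [hk]) (ne_of_mem_of_not_mem hk ha).symm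
    refine (Indep_iff _ _ μ).1 (indep_iSup_of_disjoint h_le h_indep hdisj) _ _
      (hE a (Finset.mem_insert_self a K)) ?_
    refine @MeasurableSet.biInter _ _ (⨆ i ∈ ⋃ k ∈ K, g k, m i) _ _ K.countable_toSet fun k hk => ?_
    have hmono : (⨆ i ∈ g k, m i) ≤ ⨆ i ∈ ⋃ k ∈ K, g k, m i :=
      biSup_mono fun i hi => Set.mem_biUnion hk hi
    exact hmono _ (hE k (Finset.mem_insert_of_mem hk))

variable {β : Type*} [mβ : MeasurableSpace β] {X : ℕ × ℕ → Ω → β}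

def noDetour (X : ℕ × ℕ → Ω → β) (s : Set β) (n : ℕ) : Set Ω :=
  ⋂ k ∈ Finset.Ioo 0 n, (X (0, k) ⁻¹' s ∩ X (k, n) ⁻¹' s)ᶜ

lemma measurableSet_noDetour (hmeas : ∀ p, Measurable (X p)) {s : Set β} (hs : MeasurableSet s)
    (n : ℕ) : MeasurableSet (noDetour X s n) :=
  .biInter (Finset.countable_toSet _) fun _ _ => ((hmeas _ hs).inter (hmeas _ hs)).compl

lemma measure_noDetour (hmeas : ∀ p, Measurable (X p)) (hindep : iIndepFun X μ)
    {s : Set β} (hs : MeasurableSet s) {q : ℝ≥0∞} (hq : ∀ p, μ (X p ⁻¹' s) = q) (n : ℕ) :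
    μ (noDetour X s n) = (1 - q ^ 2) ^ (n - 1) := by
  have := hindep.isProbabilityMeasure
  have hfactor : ∀ k ∈ Finset.Ioo 0 n, μ (X (0, k) ⁻¹' s ∩ X (k, n) ⁻¹' s)ᶜ = 1 - q ^ 2 := by
    intro k hk
    have hne : ((0 : ℕ), k) ≠ (k, n) := by simp at hk ⊢; omega
    rw [prob_compl_eq_one_sub ((hmeas _ hs).inter (hmeas _ hs)),
      (hindep.indepFun hne).measure_inter_preimage_eq_mul s s hs hs, hq, hq, sq]
  rw [noDetour, iIndep.measure_biInter_eq_prod_of_pairwiseDisjoint (fun p => (hmeas p).comap_le)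
      hindep.iIndep (g := fun k => {(0, k), (k, n)}), Finset.prod_congr rfl hfactor,
    Finset.prod_const, Nat.card_Ioo, Nat.sub_zero]
  · intro k hk k' hk' hkk'
    simp only [Finset.coe_Ioo, Set.mem_Ioo] at hk hk'
    simp [Function.onFun, hkk'.symm]
    omega
  · intro k _
    have hX : ∀ p ∈ ({(0, k), (k, n)} : Set (ℕ × ℕ)),
        Measurable[⨆ p ∈ ({(0, k), (k, n)} : Set (ℕ × ℕ)), mβ.comap (X p)] (X p) :=
      fun p hp => (comap_measurable (X p)).mono
        (le_iSup₂ (f := fun p (_ : p ∈ ({(0, k), (k, n)} : Set (ℕ × ℕ))) => mβ.comap (X p)) p hp)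
        le_rfl
    exact ((hX _ (by simp) hs).inter (hX _ (by simp) hs)).compl

lemma tendsto_measure_noDetour (hmeas : ∀ p, Measurable (X p)) (hindep : iIndepFun X μ)
    {s : Set β} (hs : MeasurableSet s) {q : ℝ≥0∞} (hq : ∀ p, μ (X p ⁻¹' s) = q) (hq0 : q ≠ 0) :
    Tendsto (fun n => μ (noDetour X s n)) atTop (𝓝 0) := by
  simp_rw [measure_noDetour hmeas hindep hs hq]
  exact (ENNReal.tendsto_pow_atTop_nhds_zero_of_lt_one
    (ENNReal.sub_lt_self ENNReal.one_ne_top one_ne_zero (pow_ne_zero 2 hq0))).comp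
    (tendsto_sub_atTop_nat 1)

lemma ae_forall_notMem_of_map_eq {ι : Type*} [Countable ι] {Y : ι → Ω → β}
    (hmeas : ∀ p, Measurable (Y p)) {F : Measure β} (hlaw : ∀ p, μ.map (Y p) = F) {S : Set β}
    (hF : F S = 0) : ∀ᵐ ω ∂μ, ∀ p, Y p ω ∉ S :=
  ae_all_iff.2 fun p => ae_of_ae_map (hmeas p).aemeasurable <| by
    rw [hlaw p]; exact measure_eq_zero_iff_ae_notMem.1 hF

end Independence

section Integrals

variable {Ω E : Type*} [MeasurableSpace Ω] {μ : Measure Ω} [IsProbabilityMeasure μ]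
  [TopologicalSpace E] [MeasurableSpace E] [OpensMeasurableSpace E]

lemma dist_integral_comp_le (f : E →ᵇ ℝ) {U V : Ω → E} (hU : Measurable U) (hV : Measurable V)
    {B : Set Ω} (hB : MeasurableSet B) {ε : ℝ} (hε : 0 ≤ ε)
    (h : ∀ᵐ ω ∂μ, ω ∉ B → dist (f (U ω)) (f (V ω)) ≤ ε) :
    dist (∫ ω, f (U ω) ∂μ) (∫ ω, f (V ω) ∂μ) ≤ ε + 2 * ‖f‖ * μ.real B := by
  have hint : ∀ {Z : Ω → E}, Measurable Z → Integrable (fun ω => f (Z ω)) μ := fun hZ =>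
    .of_bound (f.continuous.measurable.comp hZ).aestronglyMeasurable ‖f‖
      (ae_of_all _ fun ω => f.norm_coe_le_norm _)
  have hbound : Integrable (fun ω => ε + B.indicator (fun _ => 2 * ‖f‖) ω) μ :=
    (integrable_const ε).add ((integrable_const _).indicator hB)
  rw [dist_eq_norm, ← integral_sub (hint hU) (hint hV)]
  calc ‖∫ ω, f (U ω) - f (V ω) ∂μ‖
      ≤ ∫ ω, ε + B.indicator (fun _ => 2 * ‖f‖) ω ∂μ := by
        refine norm_integral_le_of_norm_le hbound (h.mono fun ω hω => ?_)
        rw [← dist_eq_norm]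
        by_cases hωB : ω ∈ B
        · rw [Set.indicator_of_mem hωB]
          linarith [f.dist_le_two_norm (U ω) (V ω)]
        · rw [Set.indicator_of_notMem hωB, add_zero]
          exact hω hωB
    _ = ε + 2 * ‖f‖ * μ.real B := by
        rw [integral_add (integrable_const ε) ((integrable_const _).indicator hB),
          integral_const, integral_indicator_const _ hB, probReal_univ, one_smul, smul_eq_mul,
          mul_comm]

lemma tendsto_dist_integral_comp (f : E →ᵇ ℝ) {U V : ℕ → Ω → E} (hU : ∀ n, Measurable (U n))
    (hV : ∀ n, Measurable (V n))
    (h : ∀ ε > 0, ∃ B : ℕ → Set Ω, (∀ n, MeasurableSet (B n)) ∧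
      Tendsto (fun n => μ (B n)) atTop (𝓝 0) ∧
      ∀ᶠ n in atTop, ∀ᵐ ω ∂μ, ω ∉ B n → dist (f (U n ω)) (f (V n ω)) ≤ ε) :
    Tendsto (fun n => dist (∫ ω, f (U n ω) ∂μ) (∫ ω, f (V n ω) ∂μ)) atTop (𝓝 0) := by
  refine Metric.tendsto_atTop.2 fun ε hε => ?_
  obtain ⟨B, hB, hBlim, hgood⟩ := h (ε / 2) (half_pos hε)
  have hsmall : Tendsto (fun n => 2 * ‖f‖ * μ.real (B n)) atTop (𝓝 0) := by
    simpa [measureReal_def] using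
      ((ENNReal.tendsto_toReal ENNReal.zero_ne_top).comp hBlim).const_mul (2 * ‖f‖)
  obtain ⟨N, hN⟩ := eventually_atTop.1
    (hgood.and (hsmall.eventually_lt_const (half_pos hε)))
  refine ⟨N, fun n hn => ?_⟩
  have hle := dist_integral_comp_le f (hU n) (hV n) (hB n) (half_pos hε).le (hN n hn).1
  rw [dist_zero_right, Real.norm_of_nonneg dist_nonneg]
  linarith [(hN n hn).2]

end Integrals

lemma exists_exceptional_sets_dist_maxCharge_le {Ω : Type*} [MeasurableSpace Ω]
    {μ : Measure Ω} {F : Measure EReal} {X : ℕ × ℕ → Ω → EReal} (hmeas : ∀ p, Measurable (X p))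
    (hindep : iIndepFun X μ) (hlaw : ∀ p, μ.map (X p) = F) {L : ℝ}
    (hL1 : F {x : EReal | (L : EReal) < x} = 0)
    (hL2 : ∀ z : ℝ, z < L → F {x : EReal | (z : EReal) < x} ≠ 0) (hL0 : L ≤ 0)
    {E : Type*} [PseudoMetricSpace E] {f : EReal → E} (hf : ContinuousAt f ((L : EReal) + L))
    {ε : ℝ} (hε : 0 < ε) :
    ∃ B : ℕ → Set Ω, (∀ n, MeasurableSet (B n)) ∧ Tendsto (fun n => μ (B n)) atTop (𝓝 0) ∧
      ∀ᶠ n in atTop, ∀ᵐ ω ∂μ, ω ∉ B n →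
        dist (f (maxCharge (fun i j => X (i, j) ω) 0 n)) (f (max (X (0, n) ω) (L + L))) ≤ ε := by
  have h2L : ((2 * L : ℝ) : EReal) = (L : EReal) + L := by rw [two_mul, EReal.coe_add]
  obtain ⟨a, haL, hfa⟩ := hf.exists_coe_lt_forall_Icc_dist_le (h2L ▸ EReal.coe_ne_bot _) hε
  have hcL : a / 2 < L := by
    have : a < 2 * L := EReal.coe_lt_coe_iff.1 (h2L ▸ haL)
    linarith
  have hq : ∀ p, μ (X p ⁻¹' Set.Ioi ((a / 2 : ℝ) : EReal)) = F (Set.Ioi ((a / 2 : ℝ) : EReal)) :=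
    fun p => by rw [← Measure.map_apply (hmeas p) measurableSet_Ioi, hlaw]
  refine ⟨_, measurableSet_noDetour hmeas measurableSet_Ioi,
    tendsto_measure_noDetour hmeas hindep measurableSet_Ioi hq (hL2 _ hcL), .of_forall fun n => ?_⟩
  filter_upwards [ae_forall_notMem_of_map_eq hmeas hlaw hL1] with ω hbounded hdetour
  obtain ⟨k, hk, hkn, hleft, hright⟩ : ∃ k, 0 < k ∧ k < n ∧
      ((a / 2 : ℝ) : EReal) < X (0, k) ω ∧ ((a / 2 : ℝ) : EReal) < X (k, n) ω := by
    simpa [noDetour] using hdetour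
  have hsum : (a : EReal) ≤ X (0, k) ω + X (k, n) ω := by
    calc (a : EReal) = ((a / 2 : ℝ) : EReal) + ((a / 2 : ℝ) : EReal) := by
          rw [← EReal.coe_add, add_halves]
      _ ≤ X (0, k) ω + X (k, n) ω := add_le_add hleft.le hright.le
  exact dist_maxCharge_le hε.le (fun i j => not_lt.1 (hbounded (i, j))) (by exact_mod_cast hL0)
    hk hkn hsum hfa

theorem lpp_weak_convergence_of_nonpos_general
    {Ω : Type} [MeasurableSpace Ω] (μ : Measure Ω) [IsProbabilityMeasure μ]
    (F : Measure EReal)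
    (X : ℕ × ℕ → Ω → EReal)
    (hmeas : ∀ p, Measurable (X p))
    (hindep : iIndepFun X μ)
    (hlaw : ∀ p, μ.map (X p) = F)
    (L : ℝ)
    (hL1 : F {x : EReal | (L : EReal) < x} = 0)
    (hL2 : ∀ z : ℝ, z < L → F {x : EReal | (z : EReal) < x} ≠ 0)
    (hL0 : L ≤ 0) :
    ∀ f : BoundedContinuousFunction EReal ℝ,
      Filter.Tendsto
        (fun n : ℕ => ∫ ω, f (maxCharge (fun i j => X (i, j) ω) 0 n) ∂μ)
        Filter.atTop
        (nhds (∫ x, f (max x ((2 * L : ℝ) : EReal)) ∂F)) := by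
  intro f
  have hlimit : ∀ n, ∫ ω, f (max (X (0, n) ω) (L + L)) ∂μ = ∫ x, f (max x (L + L)) ∂F := by
    intro n
    rw [← hlaw (0, n), integral_map (hmeas _).aemeasurable (by fun_prop)]
  rw [two_mul, EReal.coe_add, tendsto_iff_dist_tendsto_zero]
  refine .congr (fun n => by rw [hlimit n]) <| tendsto_dist_integral_comp f
    (V := fun n ω => max (X (0, n) ω) (L + L))
    (fun n => measurable_maxCharge (fun i j => hmeas (i, j)) 0 n)
    (fun n => (hmeas _).max measurable_const) fun _ hε =>
      exists_exceptional_sets_dist_maxCharge_le hmeas hindep hlaw hL1 hL2 hL0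
        f.continuous.continuousAt hε

/-- if the essential supremum `L` of `F` satisfies `-∞ < L ≤ 0`, then `W_n`
converges in distribution to `max(w, 2L)` where `w` has law `F`: for every bounded
continuous test function the expectations converge. -/
theorem lpp_weak_convergence_of_nonpos
    {Ω : Type} [MeasurableSpace Ω] (μ : Measure Ω) [IsProbabilityMeasure μ]
    (F : Measure EReal) [IsProbabilityMeasure F] (hFtop : F {⊤} = 0)
    (X : ℕ × ℕ → Ω → EReal)
    (hmeas : ∀ p, Measurable (X p))
    (hindep : iIndepFun X μ)
    (hlaw : ∀ p, μ.map (X p) = F)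
    (L : ℝ)
    (hL1 : F {x : EReal | (L : EReal) < x} = 0)
    (hL2 : ∀ z : ℝ, z < L → F {x : EReal | (z : EReal) < x} ≠ 0)
    (hL0 : L ≤ 0) :
    ∀ f : BoundedContinuousFunction EReal ℝ,
      Filter.Tendsto
        (fun n : ℕ => ∫ ω, f (maxCharge (fun i j => X (i, j) ω) 0 n) ∂μ)
        Filter.atTop
        (nhds (∫ x, f (max x ((2 * L : ℝ) : EReal)) ∂F)) :=
  lpp_weak_convergence_of_nonpos_general μ F X hmeas hindep hlaw L hL1 hL2 hL0
end
end

section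
/- (Decoupling property.) Fix ℓ ∈ [0,1) and a positive integer n. Let (w(t), 1 ≤ t ≤ n) be elements of 𝒲 and let ν ∈ 𝒩₀ with ν₂ ≤ −ℓ. Define ν(0) = ν, ν̃(0) = δ₀, and ν(t) = Ψ_{w(t)} ν(t−1), ν̃(t) = Ψ_{w(t)} ν̃(t−1) for 1 ≤ t ≤ n. If for every 1 ≤ t ≤ n one has max{w₁(t), …, w_t(t)} ≥ 1 − ℓ, then 𝔪(ν(n−1), w(n)) = 𝔪(ν̃(n−1), w(n)). -/
open MeasureTheory ProbabilityTheory Filter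

noncomputable section

/-- Insert the value `m` into the nonincreasing sequence `ν`, keeping it nonincreasing. -/
def insertSeq (m : EReal) (ν : ℕ → EReal) : ℕ → EReal
  | 0 => max (ν 0) m
  | k + 1 => max (ν (k + 1)) (min (ν k) m)

/-- `𝔪(ν, w) = sup_k (ν_k + w_k)`. -/
def mgsM (ν w : ℕ → EReal) : EReal := ⨆ k, (ν k + w k)

/-- The MGS map `Ψ_w ν = ν + δ_{𝔪(ν,w)}`: insert the value `𝔪(ν,w)` into `ν`. -/
def Psi (w ν : ℕ → EReal) : ℕ → EReal := insertSeq (mgsM ν w) ν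

/-- `σν`: the sequence shifted so that its largest element sits at `0`, `(σν)_k = ν_k - ν_1`. -/
def shiftSeq (ν : ℕ → EReal) : ℕ → EReal := fun k => ν k - ν 0

/-- The point measure `δ₀` as a nonincreasing sequence: a single atom at `0`
(padded with `⊥`, meaning no further atoms). -/
def deltaZero : ℕ → EReal := fun k => if k = 0 then 0 else ⊥

/-- `ν ∈ 𝒩₀`: a nonincreasing, locally finite sequence of atoms (tending to `⊥`),
whose largest atom is at `0`.  Point measures in `𝒩` are encoded as their nonincreasing
sequence of atoms, padded with `⊥`. -/
def MemN0 (ν : ℕ → EReal) : Prop :=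
  Antitone ν ∧ ν 0 = 0 ∧ Filter.Tendsto ν Filter.atTop (nhds ⊥)

/-- The MGS dynamics started at `ν`: `ν(0) = ν` and `ν(t+1) = Ψ_{w(t+1)} ν(t)`. -/
def evolve (w : ℕ → ℕ → EReal) (ν : ℕ → EReal) : ℕ → (ℕ → EReal)
  | 0 => ν
  | t + 1 => Psi (w (t + 1)) (evolve w ν t)

/-!
Compare the dynamics started from `ν` and from `δ₀` step by step. After `t` steps both share
their `t + 1` largest atoms, all nonnegative; beyond them `δ₀`'s evolution has no atoms and
`ν`'s has atoms at most at `-ℓ`. Some charge among the first `t + 1` is at least `1 - ℓ`, so the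
shared atoms already give `𝔪 ≥ 1 - ℓ`, whereas an atom beyond them contributes at most
`-ℓ + 1`. Hence both evolutions see the same `𝔪`, insert the same (nonnegative) atom, and the
picture persists.
-/

/-- The coupling after `t` steps; `a` plays the role of `-ℓ`. -/
structure Coupled (a : EReal) (t : ℕ) (μ μ' : ℕ → EReal) : Prop where
  eq_of_le : ∀ k ≤ t, μ k = μ' k
  nonneg_of_le : ∀ k ≤ t, 0 ≤ μ' k
  le_of_lt : ∀ k, t < k → μ k ≤ a
  eq_bot_of_lt : ∀ k, t < k → μ' k = ⊥

lemma le_mgsM (ν w : ℕ → EReal) (k : ℕ) : ν k + w k ≤ mgsM ν w :=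
  le_iSup (fun k => ν k + w k) k

namespace Coupled

variable {a : EReal} {t : ℕ} {μ μ' w : ℕ → EReal}

lemma of_memN0 {ν : ℕ → EReal} (hν : MemN0 ν) (hν1 : ν 1 ≤ a) : Coupled a 0 ν deltaZero where
  eq_of_le k hk := by
    obtain rfl := Nat.le_zero.1 hk
    simp [deltaZero, hν.2.1]
  nonneg_of_le k hk := by
    obtain rfl := Nat.le_zero.1 hk
    simp [deltaZero]
  le_of_lt _ hk := (hν.1 hk).trans hν1
  eq_bot_of_lt k hk := by simp [deltaZero, hk.ne']

lemma add_one_le_mgsM (h : Coupled a t μ μ') {j : ℕ} (hj : j ≤ t) (hwj : a + 1 ≤ w j) :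
    a + 1 ≤ mgsM μ' w :=
  calc a + 1 ≤ 0 + w j := by rwa [zero_add]
    _ ≤ μ' j + w j := add_le_add_left (h.nonneg_of_le j hj) _
    _ ≤ mgsM μ' w := le_mgsM μ' w j

lemma mgsM_eq (h : Coupled a t μ μ') (hw : ∀ k, w k ≤ 1) (hj : ∃ j ≤ t, a + 1 ≤ w j) :
    mgsM μ w = mgsM μ' w := by
  obtain ⟨j, hjt, hwj⟩ := hj
  apply le_antisymm <;> refine iSup_le fun k => ?_ <;> rcases le_or_gt k t with hk | hk
  · rw [h.eq_of_le k hk]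
    exact le_mgsM μ' w k
  · calc μ k + w k ≤ a + 1 := add_le_add (h.le_of_lt k hk) (hw k)
      _ ≤ mgsM μ' w := h.add_one_le_mgsM hjt hwj
  · rw [← h.eq_of_le k hk]
    exact le_mgsM μ w k
  · simp [h.eq_bot_of_lt k hk]

lemma insertSeq (h : Coupled a t μ μ') (ha : a ≤ 0) {m : EReal} (hm : 0 ≤ m) :
    Coupled a (t + 1) (insertSeq m μ) (insertSeq m μ') where
  eq_of_le
    | 0, _ => by simp only [_root_.insertSeq, h.eq_of_le 0 t.zero_le]
    | k + 1, hk => by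
      rcases (Nat.le_of_succ_le_succ hk).lt_or_eq with hkt | rfl
      · simp only [_root_.insertSeq, h.eq_of_le k hkt.le, h.eq_of_le (k + 1) hkt]
      · -- the atom `μ (k + 1) ≤ a ≤ 0` is pushed out by the new nonnegative atom
        have hmin : μ (k + 1) ≤ min (μ' k) m :=
          (h.le_of_lt _ k.lt_succ_self).trans (ha.trans (le_min (h.nonneg_of_le k le_rfl) hm))
        simp only [_root_.insertSeq, max_eq_right hmin, h.eq_of_le k le_rfl,
          h.eq_bot_of_lt _ k.lt_succ_self, bot_le, max_eq_right]
  nonneg_of_le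
    | 0, _ => (h.nonneg_of_le 0 t.zero_le).trans (le_max_left _ _)
    | k + 1, hk => (le_min (h.nonneg_of_le k (Nat.le_of_succ_le_succ hk)) hm).trans
        (le_max_right _ _)
  le_of_lt
    | k + 1, hk => max_le (h.le_of_lt _ (t.lt_succ_self.trans hk))
        ((min_le_left _ _).trans (h.le_of_lt k (Nat.lt_of_succ_lt_succ hk)))
  eq_bot_of_lt
    | k + 1, hk => by
      simp [_root_.insertSeq, h.eq_bot_of_lt _ (t.lt_succ_self.trans hk),
        h.eq_bot_of_lt k (Nat.lt_of_succ_lt_succ hk)]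

lemma psi (h : Coupled a t μ μ') (ha : a ≤ 0) (ha1 : 0 ≤ a + 1) (hw : ∀ k, w k ≤ 1)
    (hj : ∃ j ≤ t, a + 1 ≤ w j) : Coupled a (t + 1) (Psi w μ) (Psi w μ') := by
  obtain ⟨j, hjt, hwj⟩ := hj
  rw [Psi, Psi, h.mgsM_eq hw ⟨j, hjt, hwj⟩]
  exact h.insertSeq ha (ha1.trans (h.add_one_le_mgsM hjt hwj))

end Coupled

lemma coupled_evolve {a : EReal} (ha : a ≤ 0) (ha1 : 0 ≤ a + 1) {w : ℕ → ℕ → EReal}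
    (hw : ∀ t k, w t k ≤ 1) {ν : ℕ → EReal} (hν : MemN0 ν) (hν1 : ν 1 ≤ a) (t : ℕ)
    (hbar : ∀ s < t, ∃ j ≤ s, a + 1 ≤ w (s + 1) j) :
    Coupled a t (evolve w ν t) (evolve w deltaZero t) := by
  induction t with
  | zero => exact Coupled.of_memN0 hν hν1
  | succ t ih =>
    exact (ih fun s hs => hbar s (hs.trans t.lt_succ_self)).psi ha ha1 (hw (t + 1))
      (hbar t t.lt_succ_self)

/-- Decoupling property: if `ν ∈ 𝒩₀` has `ν₂ ≤ -ℓ` and the charges satisfy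
the triangular property `max{w₁(t), …, w_t(t)} ≥ 1 - ℓ` for `1 ≤ t ≤ n`, then
`𝔪(ν(n-1), w(n)) = 𝔪(ν̃(n-1), w(n))`, where `ν(·)` starts from `ν` and `ν̃(·)` from `δ₀`.
(Here `w t k` stands for the paper's `w_{k+1}(t)`.) -/
theorem mgs_decoupling
    (ℓ : ℝ) (hℓ0 : 0 ≤ ℓ) (hℓ1 : ℓ < 1) (n : ℕ) (hn : 0 < n)
    (w : ℕ → ℕ → EReal) (hw : ∀ t k, w t k ≤ 1)
    (ν : ℕ → EReal) (hν : MemN0 ν) (hν2 : ν 1 ≤ ((-ℓ : ℝ) : EReal))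
    (hbar : ∀ t, 1 ≤ t → t ≤ n → ∃ j < t, ((1 - ℓ : ℝ) : EReal) ≤ w t j)
    :
    mgsM (evolve w ν (n - 1)) (w n) = mgsM (evolve w deltaZero (n - 1)) (w n) := by
  have h_add_one : ((-ℓ : ℝ) : EReal) + 1 = ((1 - ℓ : ℝ) : EReal) := by
    rw [← EReal.coe_one, ← EReal.coe_add, neg_add_eq_sub]
  have ha : ((-ℓ : ℝ) : EReal) ≤ 0 := EReal.coe_nonpos.2 (neg_nonpos.2 hℓ0)
  have ha1 : 0 ≤ ((-ℓ : ℝ) : EReal) + 1 := h_add_one ▸ EReal.coe_nonneg.2 (by linarith)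
  have hbar' : ∀ s < n, ∃ j ≤ s, ((-ℓ : ℝ) : EReal) + 1 ≤ w (s + 1) j := fun s hs => by
    obtain ⟨j, hj, hwj⟩ := hbar (s + 1) s.succ_pos hs
    exact ⟨j, Nat.le_of_lt_succ hj, h_add_one ▸ hwj⟩
  obtain ⟨m, rfl⟩ := Nat.exists_eq_succ_of_ne_zero hn.ne'
  exact (coupled_evolve ha ha1 hw hν hν2 m fun s hs => hbar' s (hs.trans m.lt_succ_self)).mgsM_eq
    (hw (m + 1)) (hbar' m m.lt_succ_self)
end
end

section
/- Fix ℓ ∈ [0,1), a positive integer n, and elements (w(t), 0 ≤ t ≤ n) of 𝒲 such that w₁(0) ≥ ℓ and max{w₁(t), …, w_t(t)} ≥ 1 − ℓ for every 1 ≤ t ≤ n. Let ν, ν̃ be any two elements of 𝒩₀ and define ν(−1) = ν, ν̃(−1) = ν̃, and ν(t) = Ψ_{w(t)} ν(t−1), ν̃(t) = Ψ_{w(t)} ν̃(t−1) for 0 ≤ t ≤ n. Then 𝔪(σν(t−1), w(t)) = 𝔪(σν̃(t−1), w(t)) for all 1 ≤ t ≤ n. -/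
/-!
After `t ≥ 1` steps the state consists of `t` inserted atoms, all `≥ ℓ`, above the initial
atoms, all `≤ 0`. Since some `w_j(t)` with `j < t` is `≥ 1 - ℓ`, the supremum defining
`𝔪(ν(t-1), w(t))` is `≥ 1` and is attained on the top block, while the initial atoms
contribute at most `1`. As `Ψ_w` commutes with translations, the shifted top block of the next
state and `𝔪(σν(t-1), w(t))` are thus functions of the shifted top block alone, which at `t = 1`
is the single atom `0` whatever the initial state.
-/

open MeasureTheory ProbabilityTheory Filter

noncomputable section

lemma insertSeq_antitone {m : EReal} {a : ℕ → EReal} (ha : Antitone a) :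
    Antitone (insertSeq m a) := by
  refine antitone_nat_of_succ_le fun k => ?_
  cases k with
  | zero => exact max_le ((ha (Nat.zero_le 1)).trans (le_max_left _ _)) min_le_max
  | succ k =>
    exact max_le ((ha (Nat.le_succ _)).trans (le_max_left _ _))
      ((min_le_min (ha (Nat.le_succ k)) le_rfl).trans (le_max_right _ _))

lemma insertSeq_congr {m : EReal} {a b : ℕ → EReal} {t : ℕ} (hab : ∀ j < t + 1, a j = b j)
    (ha : a (t + 1) ≤ min (a t) m) (hb : b (t + 1) ≤ min (b t) m) :
    ∀ j < t + 2, insertSeq m a j = insertSeq m b j := by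
  rintro (_ | j) hj
  · simp only [insertSeq, hab 0 t.succ_pos]
  · rcases Nat.lt_succ_iff_lt_or_eq.1 hj with hj | hj
    · simp only [insertSeq, hab (j + 1) hj, hab j (by omega)]
    · obtain rfl : j = t := by omega
      show max (a (j + 1)) (min (a j) m) = max (b (j + 1)) (min (b j) m)
      rw [max_eq_right ha, max_eq_right hb, hab j j.lt_succ_self]

lemma insertSeq_const_add (c m : EReal) (a : ℕ → EReal) :
    insertSeq (c + m) (fun k => c + a k) = fun k => c + insertSeq m a k := by
  have hc : Monotone (c + ·) := fun _ _ h => add_le_add_right h c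
  funext k
  cases k <;> simp only [insertSeq, hc.map_max, hc.map_min]

lemma mgsM_const_add (r : ℝ) (a w : ℕ → EReal) :
    mgsM (fun k => r + a k) w = r + mgsM a w := by
  refine le_antisymm (iSup_le fun k => ?_) ?_
  · rw [add_assoc]
    exact add_le_add_right (le_iSup (fun k => a k + w k) k) _
  · calc (r : EReal) + mgsM a w ≤ r + (mgsM (fun k => r + a k) w - r) := by
          refine add_le_add_right (iSup_le fun k => ?_) _
          calc a k + w k = (r + a k + w k) - r := by rw [add_assoc, EReal.add_sub_cancel_left]
            _ ≤ _ := EReal.sub_le_sub (le_iSup (fun k => (r : EReal) + a k + w k) k) le_rfl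
      _ = mgsM (fun k => r + a k) w := by rw [add_comm, EReal.sub_add_cancel]

lemma Psi_const_add (r : ℝ) (a w : ℕ → EReal) :
    Psi w (fun k => r + a k) = fun k => r + Psi w a k := by
  rw [Psi, mgsM_const_add, insertSeq_const_add]
  rfl

lemma shiftSeq_const_add (r : ℝ) (a : ℕ → EReal) :
    shiftSeq (fun k => r + a k) = shiftSeq a := by
  funext k
  show (r + a k) - (r + a 0) = a k - a 0
  rw [sub_eq_add_neg, EReal.neg_add (Or.inl (EReal.coe_ne_bot r)) (Or.inl (EReal.coe_ne_top r)),
    sub_eq_add_neg (-(r : EReal)), add_add_add_comm, ← EReal.coe_neg, ← EReal.coe_add,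
    add_neg_cancel, EReal.coe_zero, zero_add, ← sub_eq_add_neg]

lemma const_add_shiftSeq {a : ℕ → EReal} {r : ℝ} (hr : a 0 = r) :
    (fun k => (r : EReal) + shiftSeq a k) = a :=
  funext fun k => by rw [shiftSeq, hr, add_comm, EReal.sub_add_cancel]

lemma shiftSeq_Psi_shiftSeq (w : ℕ → EReal) {a : ℕ → EReal} (htop : a 0 ≠ ⊤) (hbot : a 0 ≠ ⊥) :
    shiftSeq (Psi w (shiftSeq a)) = shiftSeq (Psi w a) := by
  obtain ⟨r, hr⟩ : ∃ r : ℝ, a 0 = r := ⟨_, (EReal.coe_toReal htop hbot).symm⟩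
  conv_rhs => rw [← const_add_shiftSeq hr, Psi_const_add, shiftSeq_const_add]

lemma shiftSeq_add (a w : ℕ → EReal) (k : ℕ) : shiftSeq a k + w k = (a k + w k) - a 0 := by
  simp only [shiftSeq, sub_eq_add_neg]
  exact add_right_comm _ _ _

lemma mgsM_eq_iSup_fin {a w : ℕ → EReal} {t j₀ : ℕ} (hj₀ : j₀ < t)
    (h : ∀ k, t ≤ k → a k + w k ≤ a j₀ + w j₀) : mgsM a w = ⨆ j : Fin t, (a j + w j) := by
  refine le_antisymm (iSup_le fun k => ?_) (iSup_le fun j => le_iSup (fun k => a k + w k) j)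
  by_cases hk : k < t
  · exact le_iSup_of_le (⟨k, hk⟩ : Fin t) le_rfl
  · exact (h k (not_lt.1 hk)).trans (le_iSup_of_le (⟨j₀, hj₀⟩ : Fin t) le_rfl)

/-- The shape of the state after `t` steps of the dynamics. -/
structure HasTopBlock (ℓ : ℝ) (t : ℕ) (a : ℕ → EReal) : Prop where
  antitone : Antitone a
  ell_le : ∀ j < t, (ℓ : EReal) ≤ a j
  nonpos : ∀ k, t ≤ k → a k ≤ 0
  head_ne_top : a 0 ≠ ⊤

namespace HasTopBlock

variable {ℓ : ℝ} {t j₀ : ℕ} {a b w : ℕ → EReal}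

theorem zero (ha : Antitone a) (ha0 : a 0 = 0) : HasTopBlock ℓ 0 a :=
  ⟨ha, fun _ hj => absurd hj (Nat.not_lt_zero _), fun k _ => ha0 ▸ ha k.zero_le,
    by simp [ha0]⟩

theorem head_ne_bot (h : HasTopBlock ℓ t a) (ht : 0 < t) : a 0 ≠ ⊥ :=
  ((EReal.bot_lt_coe ℓ).trans_le (h.ell_le 0 ht)).ne'

theorem shiftSeq_zero (h : HasTopBlock ℓ t a) (ht : 0 < t) : shiftSeq a 0 = 0 :=
  EReal.sub_self h.head_ne_top (h.head_ne_bot ht)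

theorem mgsM_le (h : HasTopBlock ℓ t a) (hw : ∀ k, w k ≤ 1) : mgsM a w ≤ a 0 + 1 :=
  iSup_le fun k => add_le_add (h.antitone k.zero_le) (hw k)

theorem Psi_of_le_mgsM (h : HasTopBlock ℓ t a) (hw : ∀ k, w k ≤ 1) (hm : ℓ ≤ mgsM a w) :
    HasTopBlock ℓ (t + 1) (Psi w a) where
  antitone := insertSeq_antitone h.antitone
  ell_le := by
    rintro (_ | j) hj
    · exact hm.trans (le_max_right _ _)
    · exact le_max_of_le_right (le_min (h.ell_le j (by omega)) hm)
  nonpos := by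
    rintro (_ | k) hk
    · omega
    · exact max_le (h.nonpos _ (by omega))
        (min_le_of_left_le (h.nonpos k (by omega)))
  head_ne_top := (max_lt (lt_top_iff_ne_top.2 h.head_ne_top)
    ((h.mgsM_le hw).trans_lt (EReal.add_lt_top h.head_ne_top (EReal.coe_ne_top 1)))).ne

theorem one_le_add (h : HasTopBlock ℓ t a) (hj₀ : j₀ < t)
    (hwj : ((1 - ℓ : ℝ) : EReal) ≤ w j₀) : 1 ≤ a j₀ + w j₀ :=
  calc (1 : EReal) = ((ℓ + (1 - ℓ) : ℝ) : EReal) := by norm_num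
    _ = ℓ + ((1 - ℓ : ℝ) : EReal) := EReal.coe_add _ _
    _ ≤ a j₀ + w j₀ := add_le_add (h.ell_le j₀ hj₀) hwj

theorem mgsM_shiftSeq_eq_iSup (h : HasTopBlock ℓ t a) (hw : ∀ k, w k ≤ 1) (hj₀ : j₀ < t)
    (hwj : ((1 - ℓ : ℝ) : EReal) ≤ w j₀) :
    mgsM (shiftSeq a) w = ⨆ j : Fin t, (shiftSeq a j + w j) :=
  mgsM_eq_iSup_fin hj₀ fun k hk => by
    rw [shiftSeq_add, shiftSeq_add]
    refine EReal.sub_le_sub ?_ le_rfl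
    calc a k + w k ≤ 0 + 1 := add_le_add (h.nonpos k hk) (hw k)
      _ = 1 := zero_add 1
      _ ≤ a j₀ + w j₀ := h.one_le_add hj₀ hwj

theorem shiftSeq_le_mgsM (h : HasTopBlock ℓ t a) (hj₀ : j₀ < t)
    (hwj : ((1 - ℓ : ℝ) : EReal) ≤ w j₀) : shiftSeq a t ≤ mgsM (shiftSeq a) w :=
  calc shiftSeq a t ≤ (a j₀ + w j₀) - a 0 :=
        EReal.sub_le_sub ((h.nonpos t le_rfl).trans
          (zero_le_one.trans (h.one_le_add hj₀ hwj))) le_rfl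
    _ = shiftSeq a j₀ + w j₀ := (shiftSeq_add a w j₀).symm
    _ ≤ mgsM (shiftSeq a) w := le_iSup (fun k => shiftSeq a k + w k) j₀

theorem mgsM_shiftSeq_congr (ha : HasTopBlock ℓ t a) (hb : HasTopBlock ℓ t b)
    (hw : ∀ k, w k ≤ 1) (hj₀ : j₀ < t) (hwj : ((1 - ℓ : ℝ) : EReal) ≤ w j₀)
    (hab : ∀ j < t, shiftSeq a j = shiftSeq b j) :
    mgsM (shiftSeq a) w = mgsM (shiftSeq b) w := by
  rw [ha.mgsM_shiftSeq_eq_iSup hw hj₀ hwj, hb.mgsM_shiftSeq_eq_iSup hw hj₀ hwj]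
  exact iSup_congr fun j => by rw [hab j j.2]

theorem shiftSeq_Psi_congr (ha : HasTopBlock ℓ t a) (hb : HasTopBlock ℓ t b)
    (hw : ∀ k, w k ≤ 1) (hj₀ : j₀ < t) (hwj : ((1 - ℓ : ℝ) : EReal) ≤ w j₀)
    (hab : ∀ j < t, shiftSeq a j = shiftSeq b j) :
    ∀ j < t + 1, shiftSeq (Psi w a) j = shiftSeq (Psi w b) j := by
  obtain ⟨s, rfl⟩ : ∃ s, t = s + 1 := ⟨t - 1, by omega⟩
  have hD := mgsM_shiftSeq_congr ha hb hw hj₀ hwj hab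
  have hle {c : ℕ → EReal} (hc : HasTopBlock ℓ (s + 1) c) :
      shiftSeq c (s + 1) ≤ min (shiftSeq c s) (mgsM (shiftSeq c) w) :=
    le_min (EReal.sub_le_sub (hc.antitone s.le_succ) le_rfl) (hc.shiftSeq_le_mgsM hj₀ hwj)
  have hb' := hle hb
  rw [← hD] at hb'
  have hins := insertSeq_congr hab (hle ha) hb'
  intro j hj
  rw [← shiftSeq_Psi_shiftSeq w ha.head_ne_top (ha.head_ne_bot s.succ_pos),
    ← shiftSeq_Psi_shiftSeq w hb.head_ne_top (hb.head_ne_bot s.succ_pos)]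
  show Psi w (shiftSeq a) j - Psi w (shiftSeq a) 0 = Psi w (shiftSeq b) j - Psi w (shiftSeq b) 0
  rw [Psi, Psi, ← hD, hins j hj, hins 0 (by omega)]

end HasTopBlock

lemma hasTopBlock_of_trajectory {ℓ : ℝ} {n : ℕ} {w : ℕ → ℕ → EReal} (hw : ∀ t k, w t k ≤ 1)
    (hw0 : (ℓ : EReal) ≤ w 0 0)
    (hbar : ∀ t, 1 ≤ t → t ≤ n → ∃ j < t, ((1 - ℓ : ℝ) : EReal) ≤ w t j)
    {ν : ℕ → EReal} (hν : Antitone ν) (hν0 : ν 0 = 0) {νt : ℕ → ℕ → EReal} (h0 : νt 0 = ν)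
    (hrec : ∀ t, t ≤ n → νt (t + 1) = Psi (w t) (νt t)) :
    ∀ t ≤ n + 1, HasTopBlock ℓ t (νt t) := by
  intro t
  induction t with
  | zero => exact fun _ => h0 ▸ .zero hν hν0
  | succ t ih =>
    intro ht
    have hA := ih (by omega)
    rw [hrec t (by omega)]
    refine hA.Psi_of_le_mgsM (hw t) ?_
    rcases Nat.eq_zero_or_pos t with rfl | ht1
    · exact le_iSup_of_le 0 (by rw [h0, hν0, zero_add]; exact hw0)
    · obtain ⟨j₀, hj₀, hwj⟩ := hbar t ht1 (by omega)
      exact (hw0.trans (hw 0 0)).trans ((hA.one_le_add hj₀ hwj).trans (le_iSup_of_le j₀ le_rfl))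

theorem mgs_decoupling_shifted_general
    (ℓ : ℝ) (n : ℕ)
    (w : ℕ → ℕ → EReal) (hw : ∀ t k, w t k ≤ 1)
    (hw0 : (ℓ : EReal) ≤ w 0 0)
    (hbar : ∀ t, 1 ≤ t → t ≤ n → ∃ j < t, ((1 - ℓ : ℝ) : EReal) ≤ w t j)
    (ν ν' : ℕ → EReal) (hν : MemN0 ν) (hν' : MemN0 ν')
    (νt ν't : ℕ → ℕ → EReal)
    (hν0 : νt 0 = ν) (hν'0 : ν't 0 = ν')
    (hrec : ∀ t, t ≤ n → νt (t + 1) = Psi (w t) (νt t))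
    (hrec' : ∀ t, t ≤ n → ν't (t + 1) = Psi (w t) (ν't t)) :
    ∀ t, 1 ≤ t → t ≤ n →
      mgsM (shiftSeq (νt t)) (w t) = mgsM (shiftSeq (ν't t)) (w t) := by
  have hA := hasTopBlock_of_trajectory hw hw0 hbar hν.1 hν.2.1 hν0 hrec
  have hB := hasTopBlock_of_trajectory hw hw0 hbar hν'.1 hν'.2.1 hν'0 hrec'
  have hshift : ∀ t, 1 ≤ t → t ≤ n → ∀ j < t, shiftSeq (νt t) j = shiftSeq (ν't t) j := by
    intro t ht
    induction t, ht using Nat.le_induction with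
    | base =>
      intro _ j hj
      obtain rfl : j = 0 := by omega
      rw [(hA 1 (by omega)).shiftSeq_zero one_pos, (hB 1 (by omega)).shiftSeq_zero one_pos]
    | succ t ht ih =>
      intro htn
      obtain ⟨j₀, hj₀, hwj⟩ := hbar t ht (by omega)
      rw [hrec t (by omega), hrec' t (by omega)]
      exact (hA t (by omega)).shiftSeq_Psi_congr (hB t (by omega)) (hw t) hj₀ hwj (ih (by omega))
  intro t ht htn
  obtain ⟨j₀, hj₀, hwj⟩ := hbar t ht htn
  exact (hA t (by omega)).mgsM_shiftSeq_congr (hB t (by omega)) (hw t) hj₀ hwj (hshift t ht htn)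

/-- if `w₁(0) ≥ ℓ` and `max{w₁(t), …, w_t(t)} ≥ 1 - ℓ` for `1 ≤ t ≤ n`, then
for any two starting states `ν, ν' ∈ 𝒩₀` (at time `-1`), the dynamics `ν(t) = Ψ_{w(t)} ν(t-1)`
satisfy `𝔪(σν(t-1), w(t)) = 𝔪(σν'(t-1), w(t))` for all `1 ≤ t ≤ n`.
(`νt s` encodes `ν(s-1)`, so `νt 0 = ν(-1) = ν` and `νt (s+1) = Ψ_{w(s)} νt s`.) -/
theorem mgs_decoupling_shifted
    (ℓ : ℝ) (hℓ0 : 0 ≤ ℓ) (hℓ1 : ℓ < 1) (n : ℕ) (hn : 0 < n)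
    (w : ℕ → ℕ → EReal) (hw : ∀ t k, w t k ≤ 1)
    (hw0 : (ℓ : EReal) ≤ w 0 0)
    (hbar : ∀ t, 1 ≤ t → t ≤ n → ∃ j < t, ((1 - ℓ : ℝ) : EReal) ≤ w t j)
    (ν ν' : ℕ → EReal) (hν : MemN0 ν) (hν' : MemN0 ν')
    (νt ν't : ℕ → ℕ → EReal)
    (hν0 : νt 0 = ν) (hν'0 : ν't 0 = ν')
    (hrec : ∀ t, t ≤ n → νt (t + 1) = Psi (w t) (νt t))
    (hrec' : ∀ t, t ≤ n → ν't (t + 1) = Psi (w t) (ν't t)) :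
    ∀ t, 1 ≤ t → t ≤ n →
      mgsM (shiftSeq (νt t)) (w t) = mgsM (shiftSeq (ν't t)) (w t) :=
  mgs_decoupling_shifted_general ℓ n w hw hw0 hbar ν ν' hν hν' νt ν't hν0 hν'0 hrec hrec'
end
end

section
/- Let F be a probability distribution on ℝ ∪ {−∞} with essential supremum 1 (i.e., F([1−ε,1]) > 0 for all ε > 0 and F((1,∞)) = 0). Fix ℓ ∈ [0,1) with p := F([1−ℓ,1]) ∈ (0,1]. Let (w_j(t), j ≥ 1, t ∈ ℤ) be i.i.d. random variables with law F, and for k ∈ ℤ define the event R_k := {w₁(k) ≥ ℓ} ∩ ⋂_{j ≥ 1} {max{w₁(k+j), …, w_j(k+j)} ≥ 1 − ℓ}. Then almost surely the random set J := {k ∈ ℤ : R_k holds} is unbounded above and unbounded below (i.e., inf J = −∞ and sup J = +∞ a.s.). -/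
/-!
Pass to the space of columns `ℤ → ℕ → EReal` under the product law. The conditions defining
`R_k` concern distinct columns, hence are independent, and their failure probabilities decay
geometrically, so `P(R_k) > 0`; by shift invariance this does not depend on `k`. As `R_k` only
involves the columns `≥ k`, Kolmogorov's 0-1 law makes `R_k` occur for arbitrarily large `k`
almost surely. Towards `-∞`, the probability that no `R_k` with `k ≤ N` occurs is shift invariant,
hence independent of `N`, and tends as `N → ∞` to the probability that no `R_k` occurs at all,
which is `0`.
-/

open MeasureTheory ProbabilityTheory Filter Set Measure MeasurableSpace
open scoped ENNReal

theorem measure_iInter_ne_zero_of_iIndepSet {Ω : Type*} [MeasurableSpace Ω] {μ : Measure Ω}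
    [IsProbabilityMeasure μ] {E : ℕ → Set Ω} (hE : ∀ n, MeasurableSet (E n))
    (hind : iIndepSet E μ) (hpos : ∀ n, μ (E n) ≠ 0) (hsum : ∑' n, μ (E n)ᶜ ≠ ∞) :
    μ (⋂ n, E n) ≠ 0 := by
  -- Beyond some `N` the union bound leaves positive probability; before `N`, independence does.
  obtain ⟨N, hN⟩ : ∃ N, ∑' n, μ (E (n + N))ᶜ < 1 :=
    ((tendsto_order.1 (ENNReal.tendsto_sum_nat_add _ hsum)).2 1 one_pos).exists
  have hsplit : ⋂ n, E n = (⋂ n ∈ Finset.range N, E n) ∩ ⋂ n, E (n + N) := by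
    ext ω
    simp only [mem_iInter, mem_inter_iff, Finset.mem_range]
    refine ⟨fun h => ⟨fun n _ => h n, fun n => h (n + N)⟩, fun ⟨hhead, htail⟩ n => ?_⟩
    rcases lt_or_ge n N with hn | hn
    · exact hhead n hn
    · simpa [Nat.sub_add_cancel hn] using htail (n - N)
  have hindep := hind.indep_generateFrom_of_disjoint hE {n | n < N} {n | N ≤ n}
    (disjoint_left.2 fun n (h : n < N) (h' : N ≤ n) => absurd h (not_lt.2 h'))
  have hhead : MeasurableSet[generateFrom {t | ∃ n ∈ {n | n < N}, E n = t}]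
      (⋂ n ∈ Finset.range N, E n) :=
    .biInter (Finset.range N).countable_toSet fun n hn =>
      measurableSet_generateFrom ⟨n, Finset.mem_range.1 hn, rfl⟩
  have htail : MeasurableSet[generateFrom {t | ∃ n ∈ {n | N ≤ n}, E n = t}]
      (⋂ n, E (n + N)) :=
    .iInter fun n => measurableSet_generateFrom ⟨n + N, Nat.le_add_left N n, rfl⟩
  rw [hsplit, (Indep_iff _ _ _).1 hindep _ _ hhead htail, hind.meas_biInter]
  refine mul_ne_zero (Finset.prod_ne_zero_iff.2 fun n _ => hpos n) fun h0 => ?_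
  have hcompl : μ (⋂ n, E (n + N))ᶜ < 1 := by
    rw [compl_iInter]
    exact (measure_iUnion_le _).trans_lt hN
  rw [prob_compl_eq_one_sub (MeasurableSet.iInter fun n => hE (n + N)), h0, tsub_zero] at hcompl
  exact lt_irrefl 1 hcompl

theorem measure_eq_of_preimage_eq_succ {α : Type*} [MeasurableSpace α] {μ : Measure α}
    {T : α → α} (hT : MeasurePreserving T μ μ) {A : ℤ → Set α}
    (hA : ∀ k, MeasurableSet (A k)) (hTA : ∀ k, T ⁻¹' A k = A (k + 1)) (k : ℤ) :
    μ (A k) = μ (A 0) := by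
  have hstep : ∀ k, μ (A (k + 1)) = μ (A k) := fun k => by
    rw [← hTA, hT.measure_preimage (hA k).nullMeasurableSet]
  induction k using Int.induction_on with
  | zero => rfl
  | succ k ih => rw [hstep, ih]
  | pred k ih => rw [← ih, ← hstep, sub_add_cancel]

theorem ae_frequently_atBot_of_preimage_eq_succ {α : Type*} [MeasurableSpace α] {μ : Measure α}
    [IsFiniteMeasure μ] {T : α → α} (hT : MeasurePreserving T μ μ) {A : ℤ → Set α}
    (hA : ∀ k, MeasurableSet (A k)) (hTA : ∀ k, T ⁻¹' A k = A (k + 1))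
    (hex : ∀ᵐ x ∂μ, ∃ k, x ∈ A k) :
    ∀ᵐ x ∂μ, ∃ᶠ k in atBot, x ∈ A k := by
  set C : ℤ → Set α := fun N => ⋂ k ≤ N, (A k)ᶜ
  have hCmeas : ∀ N, MeasurableSet (C N) := fun N => .iInter fun k => .iInter fun _ => (hA k).compl
  have hTC : ∀ N, T ⁻¹' C N = C (N + 1) := fun N => by
    ext x
    simp only [C, preimage_iInter, preimage_compl, hTA, mem_iInter, mem_compl_iff]
    exact ⟨fun h k hk => by simpa using h (k - 1) (by omega), fun h k hk => h (k + 1) (by omega)⟩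
  have hCanti : Antitone C := fun M N hMN => biInter_subset_biInter_left fun k hk => le_trans hk hMN
  have hCnull : μ (⋂ N, C N) = 0 := by
    refine measure_mono_null (fun x hx => ?_) (ae_iff.1 hex)
    rintro ⟨k, hk⟩
    exact mem_iInter₂.1 (mem_iInter.1 hx k) k le_rfl hk
  have hC0 : μ (C 0) = 0 := by
    refine tendsto_nhds_unique ?_ (hCnull ▸ tendsto_measure_iInter_atTop
      (fun N => (hCmeas N).nullMeasurableSet) hCanti ⟨0, measure_ne_top μ _⟩)
    exact tendsto_const_nhds.congr fun N => (measure_eq_of_preimage_eq_succ hT hCmeas hTC N).symm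
  have hCN : ∀ N, ∀ᵐ x ∂μ, x ∉ C N := fun N => by
    rw [ae_iff]
    simp only [not_not, ofPred_mem_eq]
    rw [measure_eq_of_preimage_eq_succ hT hCmeas hTC N, hC0]
  filter_upwards [ae_all_iff.2 hCN] with x hx
  rw [frequently_atBot]
  intro N
  simpa [C] using hx N

theorem ae_frequently_atTop_of_iIndep {Ω ι : Type*} [SemilatticeSup ι] [NoMaxOrder ι]
    [Nonempty ι] [Countable ι] {m0 : MeasurableSpace Ω} {μ : Measure Ω} [IsProbabilityMeasure μ]
    {s : ι → MeasurableSpace Ω} (h_le : ∀ i, s i ≤ m0) (h_indep : iIndep s μ)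
    {A : ι → Set Ω} (hA : ∀ i, MeasurableSet[⨆ j ≥ i, s j] (A i))
    {c : ℝ≥0∞} (hc : c ≠ 0) (hAc : ∀ i, c ≤ μ (A i)) :
    ∀ᵐ ω ∂μ, ∃ᶠ i in atTop, ω ∈ A i := by
  set U : ι → Set Ω := fun N => ⋃ i ≥ N, A i
  have hUanti : Antitone U := fun M N hMN => biUnion_subset_biUnion_left fun i hi => le_trans hMN hi
  have hAmeas : ∀ i, MeasurableSet (A i) := fun i => iSup₂_le (fun j _ => h_le j) _ (hA i)
  have hUmeas : ∀ N, MeasurableSet (U N) := fun N => .biUnion (to_countable _) fun i _ => hAmeas i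
  have htail : MeasurableSet[limsup s atTop] (⋂ N, U N) := by
    rw [atTop_basis.limsup_eq_iInf_iSup]
    refine measurableSet_iInf.2 fun M => measurableSet_iInf.2 fun _ => ?_
    have : ⋂ N, U N = ⋂ N, U (N ⊔ M) :=
      subset_antisymm (iInter_mono' fun N => ⟨N ⊔ M, subset_rfl⟩)
        (iInter_mono fun N => hUanti le_sup_left)
    rw [this]
    refine .iInter fun N => .biUnion (to_countable _) fun i hi => ?_
    have hle : (⨆ j ≥ i, s j) ≤ ⨆ j ∈ Ici M, s j := iSup₂_le fun j hj =>
      le_iSup₂ (f := fun j (_ : j ∈ Ici M) => s j) j (le_trans (le_trans le_sup_right hi) hj)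
    exact hle _ (hA i)
  have hge : c ≤ μ (⋂ N, U N) :=
    ge_of_tendsto (tendsto_measure_iInter_atTop (fun N => (hUmeas N).nullMeasurableSet) hUanti
      ⟨Classical.arbitrary ι, measure_ne_top μ _⟩)
      (Eventually.of_forall fun N => (hAc N).trans (measure_mono (subset_biUnion_of_mem le_rfl)))
  have hone : μ (⋂ N, U N) = 1 :=
    (measure_zero_or_one_of_measurableSet_limsup_atTop h_le h_indep htail).resolve_left
      fun h0 => hc (nonpos_iff_eq_zero.1 (h0 ▸ hge))
  filter_upwards [(mem_ae_iff_prob_eq_one (MeasurableSet.iInter hUmeas)).2 hone] with ω hω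
  simpa [U, frequently_atTop] using hω

theorem map_curry_eq_infinitePi {Ω ι κ β : Type*} [MeasurableSpace Ω] [MeasurableSpace β]
    {μ : Measure Ω} {P : Measure β} [IsProbabilityMeasure P] {X : ι × κ → Ω → β}
    (hX : ∀ p, Measurable (X p)) (hind : iIndepFun X μ) (hlaw : ∀ p, μ.map (X p) = P) :
    μ.map (fun ω i j => X (i, j) ω) = infinitePi fun _ : ι => infinitePi fun _ : κ => P := by
  have hcurry : (fun ω i j => X (i, j) ω) = MeasurableEquiv.curry ι κ β ∘ fun ω p => X p ω := rfl
  rw [hcurry, ← map_map (MeasurableEquiv.measurable _) (measurable_pi_lambda _ hX),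
    hind.map_fun_eq_infinitePi_map hX]
  simp_rw [hlaw]
  exact infinitePi_map_curry fun _ _ => P

theorem measurePreserving_comp_infinitePi {ι β : Type*} [MeasurableSpace β] (P : Measure β)
    [IsProbabilityMeasure P] {f : ι → ι} (hf : Function.Injective f) :
    MeasurePreserving (fun ω i => ω (f i)) (infinitePi fun _ => P) (infinitePi fun _ => P) :=
  ⟨by fun_prop, map_infinitePi_infinitePi_of_inj hf⟩

theorem iIndepSet_preimage_eval_infinitePi {ι κ β : Type*} [MeasurableSpace β] (P : Measure β)
    [IsProbabilityMeasure P] {f : κ → ι} (hf : Function.Injective f) {B : κ → Set β}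
    (hB : ∀ j, MeasurableSet (B j)) :
    iIndepSet (fun j => (fun ω : ι → β => ω (f j)) ⁻¹' B j) (infinitePi fun _ => P) := by
  have hind : iIndepFun (fun j (ω : ι → β) => ω (f j)) (infinitePi fun _ => P) :=
    (iIndepFun_infinitePi (X := fun _ => id) fun _ => measurable_id).precomp hf
  rw [iIndepSet_iff_meas_biInter fun j => measurable_pi_apply _ (hB j)]
  exact fun s => hind.meas_biInter fun j _ => ⟨B j, hB j, rfl⟩

section Regeneration

variable {β : Type*}

/-- `ω t i` stands for the charge `w_{i+1}(t)`. -/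
def regenerationSet (S T : Set β) (k : ℤ) : Set (ℤ → ℕ → β) :=
  {ω | ω k 0 ∈ S ∧ ∀ j : ℕ, 1 ≤ j → ∃ i < j, ω (k + j) i ∈ T}

def columnEvent (S T : Set β) : ℕ → Set (ℕ → β)
  | 0 => {x | x 0 ∈ S}
  | j + 1 => {x | ∃ i < j + 1, x i ∈ T}

theorem regenerationSet_eq_iInter (S T : Set β) (k : ℤ) :
    regenerationSet S T k = ⋂ j : ℕ, (fun ω => ω (k + j)) ⁻¹' columnEvent S T j := by
  ext ω
  simp only [regenerationSet, mem_ofPred_eq, mem_iInter, mem_preimage]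
  constructor
  · rintro ⟨hS, hT⟩ (_ | j)
    · simpa [columnEvent] using hS
    · exact hT (j + 1) j.succ_pos
  · intro h
    refine ⟨by simpa [columnEvent] using h 0, fun j hj => ?_⟩
    obtain ⟨j, rfl⟩ := Nat.exists_eq_add_of_le' hj
    exact h (j + 1)

theorem regenerationSet_shift (S T : Set β) (k : ℤ) :
    (fun ω t => ω (t + 1)) ⁻¹' regenerationSet S T k = regenerationSet S T (k + 1) := by
  ext ω
  simp [regenerationSet, add_right_comm]

variable [MeasurableSpace β] {S T : Set β}

theorem measurableSet_columnEvent (hS : MeasurableSet S) (hT : MeasurableSet T) (j : ℕ) :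
    MeasurableSet (columnEvent S T j) := by
  cases j with
  | zero => exact measurable_pi_apply 0 hS
  | succ j =>
    simp only [columnEvent, ofPred_exists]
    exact .iUnion fun i => .inter (.const _) (measurable_pi_apply i hT)

theorem measurableSet_regenerationSet_iSup_ge (hS : MeasurableSet S) (hT : MeasurableSet T)
    (k : ℤ) :
    MeasurableSet[⨆ t ≥ k, MeasurableSpace.comap (fun ω : ℤ → ℕ → β => ω t) inferInstance]
      (regenerationSet S T k) := by
  rw [regenerationSet_eq_iInter]
  refine .iInter fun j => ?_
  have hle : MeasurableSpace.comap (fun ω : ℤ → ℕ → β => ω (k + j)) inferInstance ≤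
      ⨆ t ≥ k, MeasurableSpace.comap (fun ω : ℤ → ℕ → β => ω t) inferInstance :=
    le_iSup₂_of_le (k + j) (by omega) le_rfl
  exact hle _ ⟨_, measurableSet_columnEvent hS hT j, rfl⟩

theorem measurableSet_regenerationSet (hS : MeasurableSet S) (hT : MeasurableSet T) (k : ℤ) :
    MeasurableSet (regenerationSet S T k) :=
  iSup₂_le (fun t _ => (measurable_pi_apply t).comap_le) _
    (measurableSet_regenerationSet_iSup_ge hS hT k)

variable (P : Measure β) [IsProbabilityMeasure P]

theorem infinitePi_columnEvent_ne_zero (hS : MeasurableSet S) (hT : MeasurableSet T)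
    (hPS : P S ≠ 0) (hPT : P T ≠ 0) (j : ℕ) :
    infinitePi (fun _ => P) (columnEvent S T j) ≠ 0 := by
  have heval : ∀ {B : Set β}, MeasurableSet B → infinitePi (fun _ : ℕ => P) {x | x 0 ∈ B} = P B :=
    fun hB => (measurePreserving_eval_infinitePi _ 0).measure_preimage hB.nullMeasurableSet
  cases j with
  | zero => exact (heval hS).trans_ne hPS
  | succ j =>
    refine ne_bot_of_le_ne_bot ((heval hT).trans_ne hPT) (measure_mono fun x hx => ?_)
    exact ⟨0, j.succ_pos, hx⟩

theorem infinitePi_compl_columnEvent_le (hT : MeasurableSet T) (j : ℕ) :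
    infinitePi (fun _ => P) (columnEvent S T j)ᶜ ≤ P Tᶜ ^ j := by
  cases j with
  | zero => simpa using prob_le_one
  | succ j =>
    have hpi : (columnEvent S T (j + 1))ᶜ = Set.pi ↑(Finset.range (j + 1)) fun _ => Tᶜ := by
      ext x
      simp [columnEvent]
    rw [hpi, infinitePi_pi _ fun _ _ => hT.compl, Finset.prod_const, Finset.card_range]

theorem infinitePi_regenerationSet_ne_zero (hS : MeasurableSet S) (hT : MeasurableSet T)
    (hPS : P S ≠ 0) (hPT : P T ≠ 0) (k : ℤ) :
    infinitePi (fun _ => infinitePi fun _ => P) (regenerationSet S T k) ≠ 0 := by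
  have hinj : Function.Injective fun j : ℕ => k + j :=
    (add_right_injective k).comp Nat.cast_injective
  have hmarg : ∀ j : ℕ, ∀ B, MeasurableSet B →
      infinitePi (fun _ : ℤ => infinitePi fun _ : ℕ => P) ((fun ω => ω (k + j)) ⁻¹' B) =
        infinitePi (fun _ : ℕ => P) B := fun j B hB =>
    (measurePreserving_eval_infinitePi _ (k + j)).measure_preimage hB.nullMeasurableSet
  have hgeom : ∑' j : ℕ, P Tᶜ ^ j ≠ ∞ := by
    rw [ENNReal.tsum_geometric, prob_compl_eq_one_sub hT,
      ENNReal.sub_sub_cancel ENNReal.one_ne_top prob_le_one]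
    exact ENNReal.inv_ne_top.2 hPT
  rw [regenerationSet_eq_iInter]
  refine measure_iInter_ne_zero_of_iIndepSet
    (fun j => measurable_pi_apply _ (measurableSet_columnEvent hS hT j))
    (iIndepSet_preimage_eval_infinitePi _ hinj (measurableSet_columnEvent hS hT))
    (fun j => ?_) ?_
  · rw [hmarg j _ (measurableSet_columnEvent hS hT j)]
    exact infinitePi_columnEvent_ne_zero P hS hT hPS hPT j
  · refine ne_top_of_le_ne_top hgeom (ENNReal.tsum_le_tsum fun j => ?_)
    rw [← preimage_compl, hmarg j _ (measurableSet_columnEvent hS hT j).compl]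
    exact infinitePi_compl_columnEvent_le P hT j

theorem ae_frequently_regenerationSet (hS : MeasurableSet S) (hT : MeasurableSet T)
    (hPS : P S ≠ 0) (hPT : P T ≠ 0) :
    ∀ᵐ ω ∂infinitePi (fun _ => infinitePi fun _ => P),
      (∃ᶠ k in atTop, ω ∈ regenerationSet S T k) ∧ ∃ᶠ k in atBot, ω ∈ regenerationSet S T k := by
  have hshift := measurePreserving_comp_infinitePi (infinitePi fun _ : ℕ => P)
    (add_left_injective (1 : ℤ))
  have hconst := measure_eq_of_preimage_eq_succ hshift (measurableSet_regenerationSet hS hT)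
    (regenerationSet_shift S T)
  have hup := ae_frequently_atTop_of_iIndep (fun t => (measurable_pi_apply t).comap_le)
    (iIndepFun_infinitePi (X := fun _ => id) fun _ => measurable_id).iIndep
    (measurableSet_regenerationSet_iSup_ge hS hT)
    (infinitePi_regenerationSet_ne_zero P hS hT hPS hPT 0) fun k => (hconst k).ge
  refine hup.and (ae_frequently_atBot_of_preimage_eq_succ hshift
    (measurableSet_regenerationSet hS hT) (regenerationSet_shift S T) ?_)
  filter_upwards [hup] with ω hω
  exact hω.exists

end Regeneration

theorem regeneration_times_unbounded_general
    {Ω : Type} [MeasurableSpace Ω] (μ : Measure Ω)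
    (F : Measure EReal) [IsProbabilityMeasure F]
    (hF1 : ∀ ε : ℝ, 0 < ε → 0 < F (Set.Icc ((1 - ε : ℝ) : EReal) 1))
    (ℓ : ℝ) (hℓ1 : ℓ < 1)
    (hp : 0 < F (Set.Icc ((1 - ℓ : ℝ) : EReal) 1))
    (X : ℤ × ℕ → Ω → EReal)
    (hmeas : ∀ p, Measurable (X p))
    (hindep : iIndepFun X μ)
    (hlaw : ∀ p, μ.map (X p) = F)
    (Good : ℤ → Ω → Prop)
    (hGood : ∀ k ω, Good k ω ↔
      ((ℓ : EReal) ≤ X (k, 0) ω ∧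
        ∀ j : ℕ, 1 ≤ j → ∃ i < j, ((1 - ℓ : ℝ) : EReal) ≤ X (k + (j : ℤ), i) ω))
    :
    ∀ᵐ ω ∂μ, (∀ N : ℤ, ∃ k : ℤ, N ≤ k ∧ Good k ω) ∧ (∀ N : ℤ, ∃ k : ℤ, k ≤ N ∧ Good k ω) := by
  have hFℓ : F (Ici (ℓ : EReal)) ≠ 0 := by
    have h := hF1 (1 - ℓ) (sub_pos.2 hℓ1)
    rw [sub_sub_cancel] at h
    exact (h.trans_le (measure_mono Icc_subset_Ici_self)).ne'
  have hFp : F (Ici ((1 - ℓ : ℝ) : EReal)) ≠ 0 :=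
    (hp.trans_le (measure_mono Icc_subset_Ici_self)).ne'
  have hreg := ae_frequently_regenerationSet F measurableSet_Ici measurableSet_Ici hFℓ hFp
  rw [← map_curry_eq_infinitePi hmeas hindep hlaw] at hreg
  filter_upwards [ae_of_ae_map (by fun_prop) hreg] with ω ⟨hup, hdown⟩
  refine ⟨fun N => ?_, fun N => ?_⟩
  · obtain ⟨k, hk, hkreg⟩ := frequently_atTop.1 hup N
    exact ⟨k, hk, (hGood k ω).2 hkreg⟩
  · obtain ⟨k, hk, hkreg⟩ := frequently_atBot.1 hdown N
    exact ⟨k, hk, (hGood k ω).2 hkreg⟩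

/-- with charges `w_{j+1}(t) = X(t,j)` (for `t ∈ ℤ`) i.i.d. of law `F` with
essential supremum `1`, the random set `J = {k ∈ ℤ : R_k}` of times at which the event
`R_k = {w₁(k) ≥ ℓ} ∩ ⋂_{j≥1} {max{w₁(k+j),…,w_j(k+j)} ≥ 1-ℓ}` holds is a.s. unbounded
above and below. -/
theorem regeneration_times_unbounded
    {Ω : Type} [MeasurableSpace Ω] (μ : Measure Ω) [IsProbabilityMeasure μ]
    (F : Measure EReal) [IsProbabilityMeasure F]
    (hF1 : ∀ ε : ℝ, 0 < ε → 0 < F (Set.Icc ((1 - ε : ℝ) : EReal) 1))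
    (hF2 : F {x : EReal | 1 < x} = 0)
    (ℓ : ℝ) (hℓ0 : 0 ≤ ℓ) (hℓ1 : ℓ < 1)
    (hp : 0 < F (Set.Icc ((1 - ℓ : ℝ) : EReal) 1))
    (X : ℤ × ℕ → Ω → EReal)
    (hmeas : ∀ p, Measurable (X p))
    (hindep : iIndepFun X μ)
    (hlaw : ∀ p, μ.map (X p) = F)
    (Good : ℤ → Ω → Prop)
    (hGood : ∀ k ω, Good k ω ↔
      ((ℓ : EReal) ≤ X (k, 0) ω ∧
        ∀ j : ℕ, 1 ≤ j → ∃ i < j, ((1 - ℓ : ℝ) : EReal) ≤ X (k + (j : ℤ), i) ω))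
    :
    ∀ᵐ ω ∂μ, (∀ N : ℤ, ∃ k : ℤ, N ≤ k ∧ Good k ω) ∧ (∀ N : ℤ, ∃ k : ℤ, k ≤ N ∧ Good k ω) :=
  regeneration_times_unbounded_general μ F hF1 ℓ hℓ1 hp X hmeas hindep hlaw Good hGood
end
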